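/- Let ε > 0. In the extended Battle of the Sexes game specified below, the mixed-strategy profile in which Ann plays B_together with probability 2/3 and O_together with probability 1/3, and Bob plays B_together with probability 1/3 and O_together with probability 2/3, is a Nash equilibrium; both players' mixed strategies are supported on the 'together' strategies (so the coalition {Ann, Bob} forms with probability 1), and each player's expected payoff equals 2/3 + ε. -/

import Mathlib

/-- Strategies in the extended Battle of the Sexes: Boxing/Opera,
alone/together. -/
inductive BS where
  | Ba  -- Boxing, alone
  | Oa  -- Opera, alone
  | Bt  -- Boxing, together
  | Ot  -- Opera, together
deriving DecidableEq

instance : Fintype BS where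
  elems := {BS.Ba, BS.Oa, BS.Bt, BS.Ot}
  complete := by intro x; cases x <;> simp

open BS

/-- Whether the strategy chooses Boxing. -/
def box : BS → Bool
  | Ba => true
  | Bt => true
  | _ => false

/-- Whether the strategy is a 'together' strategy. -/
def tog : BS → Bool
  | Bt => true
  | Ot => true
  | _ => false

/-- Ann's payoff: 2 if both Box, 1 if both Opera, 0 otherwise; plus `ε` if the
coalition forms (both chose 'together'). -/
def uA (ε : ℝ) (s1 s2 : BS) : ℝ :=
  (if box s1 = box s2 then (if box s1 then 2 else 1) else 0) +
    (if tog s1 = true ∧ tog s2 = true then ε else 0)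

/-- Bob's payoff: 1 if both Box, 2 if both Opera, 0 otherwise; plus `ε` if the
coalition forms. -/
def uB (ε : ℝ) (s1 s2 : BS) : ℝ :=
  (if box s1 = box s2 then (if box s1 then 1 else 2) else 0) +
    (if tog s1 = true ∧ tog s2 = true then ε else 0)

/-- A mixed strategy: a probability vector over the four pure strategies. -/
def IsMix (σ : BS → ℝ) : Prop := (∀ a, 0 ≤ σ a) ∧ (∑ a, σ a) = 1

/-- Expected payoff of the row player's payoff function `u` under the product
distribution of Ann's strategy `σ1` and Bob's strategy `σ2`. -/
noncomputable def EU (u : BS → BS → ℝ) (σ1 σ2 : BS → ℝ) : ℝ :=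
  ∑ a, ∑ b, u a b * σ1 a * σ2 b

/-- Ann's mixed strategy: `B_together` with probability `2/3`, `O_together`
with probability `1/3`. -/
noncomputable def σA : BS → ℝ
  | Bt => 2 / 3
  | Ot => 1 / 3
  | _ => 0

/-- Bob's mixed strategy: `B_together` with probability `1/3`, `O_together`
with probability `2/3`. -/
noncomputable def σB : BS → ℝ
  | Bt => 1 / 3
  | Ot => 2 / 3
  | _ => 0

/-! Against `σB`, each of Ann's 'alone' strategies earns `2/3` (she coordinates with Bob's
activity with probability `1/3` on Boxing or `2/3` on Opera) and each 'together' strategy earns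
`2/3 + ε`; symmetrically for Bob against `σA`. Since a mixed strategy earns an average of
pure-strategy payoffs, no deviation beats `2/3 + ε`, which `σA` and `σB`, supported on the
'together' strategies, attain. -/

lemma BS.sum_univ {M : Type*} [AddCommMonoid M] (f : BS → M) :
    ∑ a, f a = f Ba + f Oa + f Bt + f Ot := by
  rw [show (Finset.univ : Finset BS) = {Ba, Oa, Bt, Ot} from rfl]
  simp [add_assoc]

noncomputable def rowPayoff (u : BS → BS → ℝ) (a : BS) (σ2 : BS → ℝ) : ℝ :=
  ∑ b, u a b * σ2 b

noncomputable def colPayoff (u : BS → BS → ℝ) (σ1 : BS → ℝ) (b : BS) : ℝ :=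
  ∑ a, u a b * σ1 a

lemma EU_eq_sum_rowPayoff (u : BS → BS → ℝ) (σ1 σ2 : BS → ℝ) :
    EU u σ1 σ2 = ∑ a, σ1 a * rowPayoff u a σ2 := by
  simp only [EU, rowPayoff, Finset.mul_sum]
  exact Finset.sum_congr rfl fun _ _ => Finset.sum_congr rfl fun _ _ => by ring

lemma EU_eq_sum_colPayoff (u : BS → BS → ℝ) (σ1 σ2 : BS → ℝ) :
    EU u σ1 σ2 = ∑ b, σ2 b * colPayoff u σ1 b := by
  simp only [EU, colPayoff, Finset.mul_sum]
  rw [Finset.sum_comm]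
  exact Finset.sum_congr rfl fun _ _ => Finset.sum_congr rfl fun _ _ => by ring

lemma IsMix.sum_mul_le {τ g : BS → ℝ} {v : ℝ} (hτ : IsMix τ) (hg : ∀ a, g a ≤ v) :
    ∑ a, τ a * g a ≤ v :=
  calc ∑ a, τ a * g a ≤ ∑ a, τ a * v :=
        Finset.sum_le_sum fun a _ => mul_le_mul_of_nonneg_left (hg a) (hτ.1 a)
    _ = v := by rw [← Finset.sum_mul, hτ.2, one_mul]

lemma EU_le_of_rowPayoff_le {u : BS → BS → ℝ} {τ σ2 : BS → ℝ} {v : ℝ} (hτ : IsMix τ)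
    (h : ∀ a, rowPayoff u a σ2 ≤ v) : EU u τ σ2 ≤ v :=
  EU_eq_sum_rowPayoff u τ σ2 ▸ hτ.sum_mul_le h

lemma EU_le_of_colPayoff_le {u : BS → BS → ℝ} {σ1 τ : BS → ℝ} {v : ℝ} (hτ : IsMix τ)
    (h : ∀ b, colPayoff u σ1 b ≤ v) : EU u σ1 τ ≤ v :=
  EU_eq_sum_colPayoff u σ1 τ ▸ hτ.sum_mul_le h

lemma isMix_σA : IsMix σA :=
  ⟨fun a => by cases a <;> norm_num [σA], by norm_num [BS.sum_univ, σA]⟩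

lemma isMix_σB : IsMix σB :=
  ⟨fun a => by cases a <;> norm_num [σB], by norm_num [BS.sum_univ, σB]⟩

lemma rowPayoff_uA_σB_le {ε : ℝ} (hε : 0 ≤ ε) (a : BS) : rowPayoff (uA ε) a σB ≤ 2 / 3 + ε := by
  cases a <;> norm_num [rowPayoff, BS.sum_univ, uA, σB, box, tog] <;> linarith

lemma colPayoff_uB_σA_le {ε : ℝ} (hε : 0 ≤ ε) (b : BS) : colPayoff (uB ε) σA b ≤ 2 / 3 + ε := by
  cases b <;> norm_num [colPayoff, BS.sum_univ, uB, σA, box, tog] <;> linarith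

lemma EU_uA_σA_σB (ε : ℝ) : EU (uA ε) σA σB = 2 / 3 + ε := by
  norm_num [EU, BS.sum_univ, uA, σA, σB, box, tog]
  ring

lemma EU_uB_σA_σB (ε : ℝ) : EU (uB ε) σA σB = 2 / 3 + ε := by
  norm_num [EU, BS.sum_univ, uB, σA, σB, box, tog]
  ring

lemma coalition_prob_σA_σB :
    ∑ a, ∑ b, (if tog a = true ∧ tog b = true then σA a * σB b else 0) = 1 := by
  norm_num [BS.sum_univ, σA, σB, tog]

/-- For `ε > 0`, the profile `(σA, σB)` (supported on the 'together'
strategies) is a Nash equilibrium of the extended Battle of the Sexes; the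
coalition `{Ann, Bob}` forms with probability 1 and each player's expected
payoff is `2/3 + ε`. -/
theorem extended_bos_mixed_equilibrium (ε : ℝ) (hε : 0 < ε) :
    IsMix σA ∧ IsMix σB ∧
    (∀ τ, IsMix τ → EU (uA ε) τ σB ≤ EU (uA ε) σA σB) ∧
    (∀ τ, IsMix τ → EU (uB ε) σA τ ≤ EU (uB ε) σA σB) ∧
    (∑ a, ∑ b, (if tog a = true ∧ tog b = true then σA a * σB b else 0)) = 1 ∧
    EU (uA ε) σA σB = 2 / 3 + ε ∧
    EU (uB ε) σA σB = 2 / 3 + ε := by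
  refine ⟨isMix_σA, isMix_σB, fun τ hτ => ?_, fun τ hτ => ?_, coalition_prob_σA_σB,
    EU_uA_σA_σB ε, EU_uB_σA_σB ε⟩
  · rw [EU_uA_σA_σB]
    exact EU_le_of_rowPayoff_le hτ (rowPayoff_uA_σB_le hε.le)
  · rw [EU_uB_σA_σB]
    exact EU_le_of_colPayoff_le hτ (colPayoff_uB_σA_le hε.le)
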